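/- arXiv:2605.28130 — 12 statements merged into one kernel-verified Lean document; each statement's English description precedes it below -/
import Mathlib

section
/- In any ring R, if a is strongly m-nil clean, i.e., a = f + n where f^m = f, n is nilpotent, and fn = nf, then a is strongly π-regular; explicitly, a = (1 - f^{m-1}) + (f + f^{m-1} - 1 + n), where 1 - f^{m-1} is an idempotent commuting with a, f + f^{m-1} - 1 + n is a unit, and (1 - f^{m-1}) a (1 - f^{m-1}) is nilpotent. -/
/-- a strongly m-nil clean element is strongly π-regular, with the
explicit decomposition a = (1 - f^(m-1)) + (f + f^(m-1) - 1 + n). -/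
theorem stmt_0 {R : Type*} [Ring R] (m : ℕ) (hm : 2 ≤ m) (a f n : R)
    (hf : f ^ m = f) (hn : IsNilpotent n) (hcomm : f * n = n * f) (ha : a = f + n) :
    a = (1 - f ^ (m - 1)) + (f + f ^ (m - 1) - 1 + n) ∧
    IsIdempotentElem (1 - f ^ (m - 1)) ∧
    a * (1 - f ^ (m - 1)) = (1 - f ^ (m - 1)) * a ∧
    IsUnit (f + f ^ (m - 1) - 1 + n) ∧
    IsNilpotent ((1 - f ^ (m - 1)) * a * (1 - f ^ (m - 1))) := by
  obtain ⟨k, rfl⟩ : ∃ k, m = k + 2 := ⟨m - 2, by omega⟩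
  have hm1 : k + 2 - 1 = k + 1 := rfl
  rw [hm1]
  set e : R := f ^ (k + 1) with he
  set X : R := f ^ (2 * k + 1) with hX
  have hred : ∀ j : ℕ, f ^ (j + (k + 2)) = f ^ (j + 1) := fun j => by
    rw [pow_add, hf, ← pow_succ]
  have hfe : f * e = f := by rw [he, ← pow_succ']; exact hf
  have hef : e * f = f := by rw [he, ← pow_succ]; exact hf
  have hee : e * e = e := by
    rw [he, ← pow_add]
    have h : (k + 1) + (k + 1) = k + (k + 2) := by ring
    rw [h, hred k]
  have hfX : f * X = e := by
    rw [hX, he, ← pow_succ']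
    have h : 2 * k + 1 + 1 = k + (k + 2) := by ring
    rw [h, hred k]
  have hXf : X * f = e := by
    rw [hX, he, ← pow_succ]
    have h : 2 * k + 1 + 1 = k + (k + 2) := by ring
    rw [h, hred k]
  have heX : e * X = X := by
    rw [he, hX, ← pow_add]
    have h : (k + 1) + (2 * k + 1) = 2 * k + (k + 2) := by ring
    rw [h, hred (2 * k)]
  have hXe : X * e = X := by
    rw [he, hX, ← pow_add]
    have h : (2 * k + 1) + (k + 1) = 2 * k + (k + 2) := by ring
    rw [h, hred (2 * k)]
  have hcf : Commute n f := hcomm.symm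
  have hcn : Commute n e := hcf.pow_right (k + 1)
  refine ⟨?_, ?_, ?_, ?_, ?_⟩
  · rw [ha]; abel
  · have h : IsIdempotentElem e := hee
    exact h.one_sub
  · rw [ha]
    simp only [mul_sub, sub_mul, mul_one, one_mul, add_mul, mul_add, hfe, hef]
    rw [hcn.eq]; abel
  · have hu0 : IsUnit (f + e - 1) := by
      refine ⟨⟨f + e - 1, X + e - 1, ?_, ?_⟩, rfl⟩
      · simp only [add_mul, sub_mul, mul_add, mul_sub, one_mul, mul_one,
          hfX, hfe, heX, hee]
        abel
      · simp only [add_mul, sub_mul, mul_add, mul_sub, one_mul, mul_one,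
          hXf, hef, hXe, hee]
        abel
    have hc : Commute n (f + e - 1) :=
      (hcf.add_right hcn).sub_right (Commute.one_right n)
    exact hn.isUnit_add_left_of_commute hu0 hc
  · have hc1 : Commute n (1 - e) := (Commute.one_right n).sub_right hcn
    have key : (1 - e) * a * (1 - e) = n * (1 - e) := by
      have h1 : (1 - e) * a = n * (1 - e) := by
        rw [ha]
        simp only [sub_mul, mul_sub, one_mul, mul_one, mul_add, add_mul, hef]
        rw [← hcn.eq]
        abel
      rw [h1, mul_assoc]
      have h2 : (1 - e) * (1 - e) = 1 - e := by
        simp only [sub_mul, mul_sub, one_mul, mul_one, hee]; abel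
      rw [h2]
    rw [key]
    exact hc1.isNilpotent_mul_right hn
end

section
/- If R is a G-graded m-nil clean ring, then the identity component R_e is an m-nil clean ring. -/
/-- A G-graded ring (given by components `ℛ`) is graded m-nil clean if every
homogeneous element is the sum of a homogeneous m-potent and a homogeneous
nilpotent. -/
def GradedMNilClean {G R : Type*} [Ring R] (ℛ : G → AddSubgroup R) (m : ℕ) : Prop :=
  ∀ g : G, ∀ x ∈ ℛ g, ∃ f n : R, (∃ h, f ∈ ℛ h) ∧ f ^ m = f ∧
    (∃ h, n ∈ ℛ h) ∧ IsNilpotent n ∧ x = f + n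

/-- if R is graded m-nil clean then the identity component R_e is an
m-nil clean ring. -/
theorem stmt_5 {G R : Type*} [Group G] [DecidableEq G] [Ring R]
    (ℛ : G → AddSubgroup R)
    (hinternal : DirectSum.IsInternal ℛ)
    (hone : (1 : R) ∈ ℛ 1)
    (hmul : ∀ g h : G, ∀ a b : R, a ∈ ℛ g → b ∈ ℛ h → a * b ∈ ℛ (g * h))
    (m : ℕ) (hm : 2 ≤ m)
    (hR : GradedMNilClean ℛ m) :
    ∀ x ∈ ℛ 1, ∃ f n : R, f ∈ ℛ 1 ∧ f ^ m = f ∧ n ∈ ℛ 1 ∧ IsNilpotent n ∧ x = f + n := by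
  intro x hx
  obtain ⟨f, n, ⟨h, hf⟩, hfm, ⟨h', hn⟩, hnil, hxe⟩ := hR 1 x hx
  have hm0 : m ≠ 0 := by omega
  -- injectivity of the internal decomposition
  have hinj := hinternal.injective
  have key : (DirectSum.of (fun g => ℛ g) 1 ⟨x, hx⟩ : DirectSum G fun g => ℛ g) =
      DirectSum.of (fun g => ℛ g) h ⟨f, hf⟩ + DirectSum.of (fun g => ℛ g) h' ⟨n, hn⟩ := by
    apply hinj
    simp [DirectSum.coeAddMonoidHom_of, hxe]
  by_cases h1 : h = 1
  · subst h1
    by_cases h2 : h' = 1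
    · subst h2
      exact ⟨f, n, hf, hfm, hn, hnil, hxe⟩
    · -- n's component at h' is zero since x and f live at 1 ≠ h'
      have := congrArg (fun d => d h') key
      simp only [DirectSum.add_apply] at this
      rw [DirectSum.of_eq_of_ne _ _ _ h2,
        DirectSum.of_eq_of_ne _ _ _ h2,
        DirectSum.of_eq_same] at this
      have hn0 : n = 0 := by
        have := this.symm
        rw [zero_add] at this
        exact congrArg Subtype.val this
      refine ⟨f, 0, hf, hfm, (ℛ 1).zero_mem, ⟨1, by simp⟩, ?_⟩
      rw [hxe, hn0]
  · have := congrArg (fun d => d (1 : G)) key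
    simp only [DirectSum.add_apply] at this
    by_cases h2 : h' = 1
    · subst h2
      rw [DirectSum.of_eq_same, DirectSum.of_eq_of_ne _ _ _ (Ne.symm h1),
        DirectSum.of_eq_same] at this
      have hxn : x = n := by simpa using congrArg Subtype.val this
      have hf0 : f = 0 := by
        have h3 : f + n = 0 + n := by rw [zero_add, ← hxe]; exact hxn
        exact add_right_cancel h3
      refine ⟨0, n, (ℛ 1).zero_mem, by rw [zero_pow hm0], hn, hnil, ?_⟩
      rw [hxe, hf0]
    · rw [DirectSum.of_eq_same, DirectSum.of_eq_of_ne _ _ _ (Ne.symm h1),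
        DirectSum.of_eq_of_ne _ _ _ (Ne.symm h2)] at this
      have hx0 : x = 0 := by
        have : (⟨x, hx⟩ : ℛ 1) = 0 := by rw [this, add_zero]
        exact congrArg Subtype.val this
      exact ⟨0, 0, (ℛ 1).zero_mem, by rw [zero_pow hm0], (ℛ 1).zero_mem,
        ⟨1, by simp⟩, by rw [hx0, add_zero]⟩
end

section
/- Let R be a G-graded m-nil clean ring with G an (m-1)-torsion free group. Then every homogeneous element of R_g with g ≠ e is nilpotent. -/
/-- if R is graded m-nil clean and G is (m-1)-torsion free, then
every homogeneous element of degree g ≠ e is nilpotent. -/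
theorem stmt_6 {G R : Type*} [Group G] [DecidableEq G] [Ring R]
    (ℛ : G → AddSubgroup R)
    (hinternal : DirectSum.IsInternal ℛ)
    (hone : (1 : R) ∈ ℛ 1)
    (hmul : ∀ g h : G, ∀ a b : R, a ∈ ℛ g → b ∈ ℛ h → a * b ∈ ℛ (g * h))
    (m : ℕ) (hm : 2 ≤ m)
    (htf : ∀ g : G, g ^ (m - 1) = 1 → g = 1)
    (hR : GradedMNilClean ℛ m) :
    ∀ g : G, g ≠ 1 → ∀ r ∈ ℛ g, IsNilpotent r := by
  -- disjointness of distinct components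
  have hdisj : ∀ a b : G, a ≠ b → ∀ x : R, x ∈ ℛ a → x ∈ ℛ b → x = 0 := by
    intro a b hab x hxa hxb
    have himg : (DirectSum.coeAddMonoidHom ℛ) (DirectSum.of (fun i => ℛ i) a ⟨x, hxa⟩)
        = (DirectSum.coeAddMonoidHom ℛ) (DirectSum.of (fun i => ℛ i) b ⟨x, hxb⟩) := by
      simp [DirectSum.coeAddMonoidHom_of]
    have heq := hinternal.injective himg
    have := DFunLike.congr_fun heq a
    rw [DirectSum.of_eq_same, DirectSum.of_eq_of_ne _ _ _ hab] at this
    exact congrArg Subtype.val this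
  have hpow : ∀ (a : R) (c : G), a ∈ ℛ c → ∀ k : ℕ, a ^ k ∈ ℛ (c ^ k) := by
    intro a c hac k
    induction k with
    | zero => simpa using hone
    | succ k ih => rw [pow_succ, pow_succ]; exact hmul _ _ _ _ ih hac
  intro g hg r hr
  obtain ⟨f, n, ⟨h, hf⟩, hfm, ⟨k, hn⟩, hniln, hrfn⟩ := hR g r hr
  rcases eq_or_ne f 0 with hf0 | hf0
  · rw [hrfn, hf0, zero_add]; exact hniln
  -- degree of f is 1
  have hh1 : h = 1 := by
    have hfm' : f ∈ ℛ (h ^ m) := hfm ▸ hpow f h hf m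
    have hhm : h ^ m = h := by
      by_contra hne
      exact hf0 (hdisj _ _ hne f hfm' hf)
    have hm1 : m - 1 + 1 = m := by omega
    apply htf
    have : h ^ (m - 1) * h = 1 * h := by
      rw [← pow_succ, hm1, hhm, one_mul]
    exact mul_right_cancel this
  subst hh1
  by_cases hk : k = 1
  · subst hk
    have hr1 : r ∈ ℛ 1 := by rw [hrfn]; exact add_mem hf hn
    have : r = 0 := hdisj g 1 hg r hr hr1
    exact this ▸ ⟨1, by simp⟩
  · exfalso
    have himg : (DirectSum.coeAddMonoidHom ℛ) (DirectSum.of (fun i => ℛ i) g ⟨r, hr⟩)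
        = (DirectSum.coeAddMonoidHom ℛ)
          (DirectSum.of (fun i => ℛ i) (1 : G) ⟨f, hf⟩ + DirectSum.of (fun i => ℛ i) k ⟨n, hn⟩) := by
      simp [map_add, DirectSum.coeAddMonoidHom_of, hrfn]
    have heq := hinternal.injective himg
    have := DFunLike.congr_fun heq 1
    rw [DirectSum.add_apply, DirectSum.of_eq_of_ne _ _ _ (Ne.symm hg),
      DirectSum.of_eq_same, DirectSum.of_eq_of_ne _ _ _ (Ne.symm hk)] at this
    have hfz : f = 0 := by
      have := congrArg Subtype.val this.symm
      simpa using this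
    exact hf0 hfz
end

section
/- Let R be a ring in which m-1 is a unit (m ≥ 2) and let I be a nil ideal of R. Then m-potents lift modulo I: for any x ∈ R with x^m - x ∈ I, there exists f ∈ R with f^m = f and f - x ∈ I. -/
open Polynomial Function

/-- if m-1 is a unit and I is a nil (two-sided) ideal, then
m-potents lift modulo I. -/
theorem stmt_9 {R : Type*} [Ring R] (m : ℕ) (hm : 2 ≤ m)
    (hu : IsUnit ((m : R) - 1))
    (I : TwoSidedIdeal R) (hnil : ∀ x ∈ I, IsNilpotent x) :
    ∀ x : R, x ^ m - x ∈ I → ∃ f : R, f ^ m = f ∧ f - x ∈ I := by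
  intro x hx
  obtain ⟨k, rfl⟩ : ∃ k, m = k + 2 := ⟨m - 2, by omega⟩
  set v : R := ↑hu.unit⁻¹ with hv
  -- x commutes with v
  have hxv : Commute x v := by
    have hxm : Commute x (((k + 2 : ℕ) : R) - 1) :=
      ((Nat.cast_commute (k+2) x).symm).sub_right (Commute.one_right x)
    have : Commute x ↑hu.unit := by rwa [IsUnit.unit_spec]
    exact this.units_inv_right
  -- the key relation in R
  have hRv : ((k : R) + 1) * v = 1 := by
    have h := hu.unit.mul_inv
    rw [IsUnit.unit_spec] at h
    have e2 : ((k : R) + 1) = (((k + 2 : ℕ) : R) - 1) := by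
      push_cast
      rw [add_sub_assoc]
      norm_num
    rw [e2]
    exact h
  -- the commutative subring generated by x and v
  set s : Set R := {x, v} with hs
  have hcomm : ∀ a ∈ s, ∀ b ∈ s, a * b = b * a := by
    rintro a (rfl | rfl) b (rfl | rfl)
    · rfl
    · exact hxv.eq
    · exact hxv.symm.eq
    · rfl
  set A := Subring.closure s with hA
  letI : CommRing A := Subring.closureCommRingOfComm hcomm
  have hxA : x ∈ A := Subring.subset_closure (by simp [hs])
  have hvA : v ∈ A := Subring.subset_closure (by simp [hs])
  set xA : A := ⟨x, hxA⟩ with hxAdef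
  set vA : A := ⟨v, hvA⟩ with hvAdef
  have h1 : ((k : A) + 1) * vA = 1 := by
    ext
    push_cast
    exact hRv
  -- the polynomial
  set P : A[X] := X ^ (k+2) - X with hP
  have haevalP : ∀ y : A, aeval y P = y ^ (k+2) - y := by
    intro y; simp [hP]
  have haevalP' : ∀ y : A, aeval y (derivative P) = ((k : A) + 2) * y ^ (k+1) - 1 := by
    intro y
    simp [hP, derivative_X_pow]; ring
  -- nilpotency of t := aeval xA P
  set t : A := aeval xA P with ht
  have htcoe : (t : R) = x ^ (k+2) - x := by
    rw [ht, haevalP]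
    push_cast
    rfl
  obtain ⟨n, hn⟩ : IsNilpotent ((x : R) ^ (k+2) - x) := hnil _ hx
  have htn : t ^ n = 0 := by
    ext
    push_cast [htcoe]
    exact hn
  have htnil : IsNilpotent t := ⟨n, htn⟩
  -- P'(xA) is a unit
  have hunit : IsUnit (aeval xA (derivative P)) := by
    rw [haevalP']
    set c : A := (vA + 1) * xA ^ (k+1) - 1 with hc
    have key : c * (((k : A) + 2) * xA ^ (k+1) - 1)
        = 1 + (xA ^ (k+2) - xA) * (((k : A) + 2) * (vA + 1) * xA ^ k) := by
      rw [hc]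
      linear_combination (xA ^ (k+1)) * h1
    have hnil2 : IsNilpotent ((xA ^ (k+2) - xA) * (((k : A) + 2) * (vA + 1) * xA ^ k)) := by
      have hne : IsNilpotent (xA ^ (k+2) - xA) := by rw [← haevalP]; exact htnil
      exact (Commute.all _ _).isNilpotent_mul_right hne
    have : IsUnit (c * (((k : A) + 2) * xA ^ (k+1) - 1)) := by
      rw [key]; exact hnil2.isUnit_one_add
    exact isUnit_of_mul_isUnit_right this
  -- Newton iteration
  set r : A := P.newtonMap^[n] xA with hr
  have hroot : aeval r P = 0 := by
    rw [← zero_dvd_iff, ← pow_eq_zero_of_le (Nat.lt_two_pow_self (n := n)).le htn]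
    exact P.aeval_pow_two_pow_dvd_aeval_iterate_newtonMap htnil hunit n
  have hdvd : ∀ j, t ∣ P.newtonMap^[j] xA - xA := by
    intro j
    induction j with
    | zero => simp
    | succ j ih =>
      rw [iterate_succ', comp_apply, newtonMap_apply]
      have h2 : t ∣ aeval (P.newtonMap^[j] xA) P :=
        dvd_trans (dvd_pow_self t (pow_ne_zero j two_ne_zero))
          (P.aeval_pow_two_pow_dvd_aeval_iterate_newtonMap htnil hunit j)
      have heq : P.newtonMap^[j] xA - Ring.inverse (aeval (P.newtonMap^[j] xA) (derivative P)) *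
          aeval (P.newtonMap^[j] xA) P - xA
          = (P.newtonMap^[j] xA - xA) - Ring.inverse (aeval (P.newtonMap^[j] xA) (derivative P)) *
          aeval (P.newtonMap^[j] xA) P := by ring
      rw [heq]
      exact dvd_sub ih (Dvd.dvd.mul_left h2 _)
  obtain ⟨q, hq⟩ := hdvd n
  refine ⟨(r : R), ?_, ?_⟩
  · have hrm : r ^ (k+2) = r := by
      have h := hroot
      rw [haevalP, sub_eq_zero] at h
      exact h
    calc (r : R) ^ (k+2) = ((r ^ (k+2) : A) : R) := by push_cast; rfl
    _ = (r : R) := by rw [hrm]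
  · have hcoe : (r : R) - x = (x ^ (k+2) - x) * (q : R) := by
      have h : ((r - xA : A) : R) = ((t * q : A) : R) := congrArg _ hq
      push_cast at h
      rw [← htcoe]
      simpa using h
    rw [hcoe]
    exact I.mul_mem_right _ _ hx
end

section
/- Let G be an (m-1)-torsion free group, R a G-graded ring with m-1 a unit in R, and I a graded-nil ideal of R (a homogeneous ideal all of whose homogeneous elements are nilpotent). Then R is graded m-nil clean if and only if R/I is graded m-nil clean. -/
open Polynomial in
/-- An element that is m-potent and nilpotent is zero. -/
private lemma aux_mpot_nil {S : Type*} [Ring S] {m : ℕ} (hm : 2 ≤ m) {f : S}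
    (hf : f ^ m = f) (hn : IsNilpotent f) : f = 0 := by
  obtain ⟨N, hN⟩ := hn
  have hstep : f ^ (m - 1) * f = f := by
    rw [← pow_succ]
    have h1 : m - 1 + 1 = m := by omega
    rw [h1, hf]
  have key : ∀ j : ℕ, (f ^ (m - 1)) ^ j * f = f := by
    intro j
    induction j with
    | zero => simp
    | succ j ih => rw [pow_succ, mul_assoc, hstep, ih]
  have h0 : (f ^ (m - 1)) ^ N = 0 := by
    rw [← pow_mul, mul_comm, pow_mul, hN, zero_pow (show m - 1 ≠ 0 by omega)]
  rw [← key N, h0, zero_mul]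

/-- In a commutative ring, if `m-1` is invertible and `e^m - e` is nilpotent, then the
derivative `m e^(m-1) - 1` of `X^m - X` at `e` is a unit. -/
private lemma aux_deriv_unit {A : Type*} [CommRing A] {m : ℕ} (hm : 2 ≤ m) {u e : A}
    (hu : u * ((m : A) - 1) = 1) (ha : IsNilpotent (e ^ m - e)) :
    IsUnit ((m : A) * e ^ (m - 1) - 1) := by
  set ε := e ^ (m - 1) with hε
  have hd : ε * ε = ε + e ^ (m - 2) * (e ^ m - e) := by
    have h1 : (m - 1) + (m - 1) = (m - 2) + m := by omega
    have h2 : (m - 2) + 1 = m - 1 := by omega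
    calc ε * ε = e ^ ((m - 1) + (m - 1)) := by rw [hε, pow_add]
    _ = ε + e ^ (m - 2) * (e ^ m - e) := by
        rw [h1, pow_add, hε, mul_sub, ← pow_succ, h2]
        ring
  have hkey : ((m : A) * ε - 1) * (u * ε - 1 + ε)
      = 1 + (m : A) * (u + 1) * (e ^ (m - 2) * (e ^ m - e)) := by
    linear_combination ((m : A) * (u + 1)) * hd + ε * hu
  have hnil : IsNilpotent ((m : A) * (u + 1) * (e ^ (m - 2) * (e ^ m - e))) :=
    (Commute.all _ _).isNilpotent_mul_left ((Commute.all _ _).isNilpotent_mul_left ha)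
  have hunit : IsUnit (((m : A) * ε - 1) * (u * ε - 1 + ε)) := by
    rw [hkey]; exact hnil.isUnit_one_add
  exact isUnit_of_mul_isUnit_left hunit

open Polynomial in
/-- Lifting m-potents: in a commutative ring with `m-1` invertible, if `e^m - e` is
nilpotent and lies in an ideal `J`, there is an m-potent `f` with `f - e ∈ J`. -/
private lemma aux_lift {A : Type*} [CommRing A] {m : ℕ} (hm : 2 ≤ m) {u e : A}
    (hu : u * ((m : A) - 1) = 1) (ha : IsNilpotent (e ^ m - e))
    (J : Ideal A) (hJ : e ^ m - e ∈ J) :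
    ∃ f : A, f ^ m = f ∧ f - e ∈ J := by
  set P : ℤ[X] := X ^ m - X with hP
  have hevalP : ∀ z : A, aeval z P = z ^ m - z := by
    intro z; simp [hP]
  have hevalP' : ∀ z : A, aeval z (derivative P) = (m : A) * z ^ (m - 1) - 1 := by
    intro z
    rw [hP, derivative_sub, derivative_X_pow, derivative_X]
    simp
  have hevalPQ : ∀ z : A ⧸ J, aeval z P = z ^ m - z := by
    intro z; simp [hP]
  have hevalPQ' : ∀ z : A ⧸ J, aeval z (derivative P) = (m : A ⧸ J) * z ^ (m - 1) - 1 := by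
    intro z
    rw [hP, derivative_sub, derivative_X_pow, derivative_X]
    simp
  -- existence of an m-potent close to e
  have h0 : IsNilpotent (aeval e P) := by rw [hevalP]; exact ha
  have h1 : IsUnit (aeval e (derivative P)) := by rw [hevalP']; exact aux_deriv_unit hm hu ha
  obtain ⟨f, ⟨hfnil, hfroot⟩, -⟩ := P.existsUnique_nilpotent_sub_and_aeval_eq_zero h0 h1
  have hfm : f ^ m = f := by
    have := hfroot; rw [hevalP] at this; exact sub_eq_zero.mp this
  -- uniqueness in the quotient by J
  set q := Ideal.Quotient.mk J with hq
  have hq0 : aeval (q e) P = 0 := by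
    rw [hevalPQ, ← map_pow, ← map_sub, Ideal.Quotient.eq_zero_iff_mem]
    exact hJ
  have hqu : IsUnit (aeval (q e) (derivative P)) := by
    rw [hevalPQ']
    have h2 : ((m : A ⧸ J) * (q e) ^ (m - 1) - 1) = q ((m : A) * e ^ (m - 1) - 1) := rfl
    rw [h2]
    rw [hevalP'] at h1
    exact h1.map q
  obtain ⟨r, -, hrunique⟩ :=
    P.existsUnique_nilpotent_sub_and_aeval_eq_zero (x := q e) (hq0 ▸ IsNilpotent.zero) hqu
  have he1 : IsNilpotent (q e - q e) ∧ aeval (q e) P = 0 := ⟨by simp, hq0⟩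
  have hf1 : IsNilpotent (q e - q f) ∧ aeval (q f) P = 0 := by
    refine ⟨?_, ?_⟩
    · rw [← map_sub]; exact hfnil.map q
    · rw [hevalPQ, ← map_pow, ← map_sub]
      rw [show f ^ m - f = 0 from sub_eq_zero.mpr hfm, map_zero]
  have hqfe : q f = q e := (hrunique _ hf1).trans (hrunique _ he1).symm
  exact ⟨f, hfm, (Ideal.Quotient.eq).mp hqfe⟩


/-- with G an (m-1)-torsion free group, m-1 a unit in R, and I a
graded-nil homogeneous ideal (realized as the kernel of the surjection
π : R → S, S playing the role of R/I with its induced grading), R is graded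
m-nil clean iff R/I is graded m-nil clean. -/
theorem stmt_10 {G R S : Type*} [Group G] [DecidableEq G] [Ring R] [Ring S]
    (ℛ : G → AddSubgroup R) [DirectSum.Decomposition ℛ]
    (hone : (1 : R) ∈ ℛ 1)
    (hmul : ∀ g h : G, ∀ a b : R, a ∈ ℛ g → b ∈ ℛ h → a * b ∈ ℛ (g * h))
    (m : ℕ) (hm : 2 ≤ m)
    (htf : ∀ g : G, g ^ (m - 1) = 1 → g = 1)
    (hu : IsUnit ((m : R) - 1))
    (π : R →+* S) (hπ : Function.Surjective π)
    (hIhom : ∀ x : R, π x = 0 → ∀ g : G, π (DirectSum.decompose ℛ x g : R) = 0)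
    (hInil : ∀ g : G, ∀ x ∈ ℛ g, π x = 0 → IsNilpotent x) :
    GradedMNilClean ℛ m ↔
      GradedMNilClean (fun g => (ℛ g).map π.toAddMonoidHom) m := by
  have hpow : ∀ (g : G) (x : R), x ∈ ℛ g → ∀ k : ℕ, x ^ k ∈ ℛ (g ^ k) := by
    intro g x hx k
    induction k with
    | zero => simpa using hone
    | succ k ih => rw [pow_succ, pow_succ]; exact hmul _ _ _ _ ih hx
  constructor
  · -- forward direction
    intro hR g s hs
    obtain ⟨x, hx, rfl⟩ := hs
    obtain ⟨f, n, ⟨h₁, hf⟩, hfm, ⟨h₂, hn⟩, hnil, rfl⟩ := hR g x hx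
    exact ⟨π f, π n, ⟨h₁, ⟨f, hf, rfl⟩⟩, by rw [← map_pow, hfm],
      ⟨h₂, ⟨n, hn, rfl⟩⟩, hnil.map π, by rw [map_add]; rfl⟩
  · -- backward direction
    intro hS
    -- components of products with same-degree elements vanish under π
    have hsect : ∀ {g₁ g₂ : G} {x₁ x₂ : R}, g₁ ≠ g₂ → x₁ ∈ ℛ g₁ → x₂ ∈ ℛ g₂ →
        π x₁ = π x₂ → π x₁ = 0 := by
      intro g₁ g₂ x₁ x₂ hne h1 h2 heq
      have hker : π (x₁ - x₂) = 0 := by rw [map_sub, heq, sub_self]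
      have hc : ((DirectSum.decompose ℛ (x₁ - x₂) g₁ : ℛ g₁) : R) = x₁ := by
        rw [DirectSum.decompose_sub, DirectSum.sub_apply, AddSubgroupClass.coe_sub,
          DirectSum.decompose_of_mem_same ℛ h1,
          DirectSum.decompose_of_mem_ne ℛ h2 (Ne.symm hne), sub_zero]
      have := hIhom _ hker g₁
      rwa [hc] at this
    -- the inverse of (m : R) - 1 is homogeneous of degree one
    set u₀ : R := ↑hu.unit⁻¹ with hu₀
    have huw : u₀ * ((m : R) - 1) = 1 := hu.val_inv_mul
    have hwu : ((m : R) - 1) * u₀ = 1 := hu.mul_val_inv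
    have hdecn : ∀ (n : ℕ) (z : R),
        ((DirectSum.decompose ℛ ((n : R) * z) 1 : ℛ 1) : R)
          = (n : R) * ((DirectSum.decompose ℛ z 1 : ℛ 1) : R) := by
      intro n z
      induction n with
      | zero => simp
      | succ n ih =>
        have hrw : ((n : R) + 1) * z = (n : R) * z + z := by
          rw [add_mul, one_mul]
        push_cast
        rw [hrw, DirectSum.decompose_add, DirectSum.add_apply, AddSubgroup.coe_add, ih,
          add_mul, one_mul]
    set u₁ : R := ((DirectSum.decompose ℛ u₀ 1 : ℛ 1) : R) with hu₁
    have hu₁mem : u₁ ∈ ℛ 1 := SetLike.coe_mem _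
    have humem : u₀ ∈ ℛ 1 := by
      have h2 : (m : R) * u₀ - u₀ = 1 := by rw [← hwu, sub_mul, one_mul]
      have h6 : ((DirectSum.decompose ℛ ((m : R) * u₀ - u₀) 1 : ℛ 1) : R) = 1 := by
        rw [h2]; exact DirectSum.decompose_of_mem_same ℛ hone
      have h7 : (m : R) * u₁ - u₁ = 1 := by
        rw [← h6, DirectSum.decompose_sub, DirectSum.sub_apply, AddSubgroupClass.coe_sub,
          hdecn m u₀, hu₁]
      have hwu₁ : ((m : R) - 1) * u₁ = 1 := by rw [sub_mul, one_mul]; exact h7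
      have huu₁ : u₀ = u₁ := by
        calc u₀ = u₀ * (((m : R) - 1) * u₁) := by rw [hwu₁, mul_one]
        _ = (u₀ * ((m : R) - 1)) * u₁ := by rw [mul_assoc]
        _ = u₁ := by rw [huw, one_mul]
      rw [huu₁]; exact hu₁mem
    have hcomm : ∀ x : R, Commute x u₀ := by
      intro x
      have h1 : Commute x ((m : R) - 1) :=
        Commute.sub_right ((Nat.cast_commute m x).symm) (Commute.one_right x)
      have h2 : Commute x (hu.unit : R) := by rwa [IsUnit.unit_spec]
      exact h2.units_inv_right
    intro g x hx
    obtain ⟨fb, nb, ⟨h, hf⟩, hfm, ⟨h', hn⟩, hnnil, hsum⟩ := hS g (π x) ⟨x, hx, rfl⟩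
    by_cases hf0 : fb = 0
    · -- π x is nilpotent, hence x is nilpotent
      obtain ⟨k, hk⟩ := hnnil
      have hπx : π x = nb := by rw [hsum, hf0, zero_add]
      have hπxk : π (x ^ k) = 0 := by rw [map_pow, hπx, hk]
      obtain ⟨j, hj⟩ := hInil (g ^ k) (x ^ k) (hpow g x hx k) hπxk
      exact ⟨0, x, ⟨1, zero_mem _⟩, by rw [zero_pow (show m ≠ 0 by omega)],
        ⟨g, hx⟩, ⟨k * j, by rw [pow_mul]; exact hj⟩, (zero_add x).symm⟩
    · obtain ⟨y, hy, hyπ'⟩ := hf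
      have hyπ : π y = fb := hyπ'
      -- the degree of fb must be 1
      have hh1 : h = 1 := by
        by_cases hmh : h ^ m = h
        · apply htf
          have hcan : h ^ (m - 1) * h = 1 * h := by
            rw [one_mul, ← pow_succ, show m - 1 + 1 = m by omega, hmh]
          exact mul_right_cancel hcan
        · exfalso
          apply hf0
          have h1 : π (y ^ m) = π y := by rw [map_pow, hyπ, hfm]
          have h2 := hsect hmh (hpow h y hy m) hy h1
          rw [h1, hyπ] at h2
          exact h2
      subst hh1
      by_cases hg1 : g = 1
      · subst hg1
        -- main lifting argument
        have hcomm2 : ∀ a ∈ ({y, u₀} : Set R), ∀ b ∈ ({y, u₀} : Set R), a * b = b * a := by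
          intro a ha b hb
          simp only [Set.mem_insert_iff, Set.mem_singleton_iff] at ha hb
          rcases ha with rfl | rfl <;> rcases hb with rfl | rfl
          · rfl
          · exact (hcomm a).eq
          · exact (hcomm b).eq.symm
          · rfl
        let A := Algebra.adjoin ℤ ({y, u₀} : Set R)
        letI : CommRing A := Algebra.adjoinCommRingOfComm ℤ hcomm2
        have hAsub : ∀ r : R, r ∈ A → r ∈ ℛ 1 := by
          intro r hr
          refine Algebra.adjoin_induction ?_ ?_ ?_ ?_ hr
          · intro z hz
            rcases (by simpa using hz : z = y ∨ z = u₀) with rfl | rfl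
            · exact hy
            · exact humem
          · intro r
            have : (algebraMap ℤ R r) = r • (1 : R) := by
              simp [zsmul_eq_mul]
            rw [this]
            exact zsmul_mem hone r
          · intro a b _ _ hpa hpb; exact add_mem hpa hpb
          · intro a b _ _ hpa hpb; simpa using hmul 1 1 a b hpa hpb
        have hyA : y ∈ A := Algebra.subset_adjoin (by simp)
        have huA : u₀ ∈ A := Algebra.subset_adjoin (by simp)
        set ey : A := ⟨y, hyA⟩ with hey
        set eu : A := ⟨u₀, huA⟩ with heu'
        have heu : eu * ((m : A) - 1) = 1 := by
          apply Subtype.val_injective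
          push_cast
          exact huw
        have hπy : π (y ^ m - y) = 0 := by
          rw [map_sub, map_pow, hyπ, hfm, sub_self]
        have hymem : y ^ m - y ∈ ℛ 1 := sub_mem (by simpa using hpow 1 y hy m) hy
        have hnily : IsNilpotent (y ^ m - y) := hInil 1 _ hymem hπy
        have hnilA : IsNilpotent (ey ^ m - ey) := by
          obtain ⟨k, hk⟩ := hnily
          refine ⟨k, Subtype.val_injective ?_⟩
          push_cast
          simpa using hk
        let ρ : A →+* S := π.comp (Subalgebra.val A).toRingHom
        let J := RingHom.ker ρ
        have hJmem : ey ^ m - ey ∈ J := by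
          show ρ (ey ^ m - ey) = 0
          have : ρ (ey ^ m - ey) = π (y ^ m - y) := by
            simp [ρ, hey]
          rw [this, hπy]
        obtain ⟨fh, hfhm, hfhJ⟩ := aux_lift hm heu hnilA J hJmem
        have hfmem : (fh : R) ∈ ℛ 1 := hAsub _ fh.2
        have hnmem : x - (fh : R) ∈ ℛ 1 := sub_mem hx hfmem
        refine ⟨(fh : R), x - (fh : R), ⟨1, hfmem⟩, ?_, ⟨1, hnmem⟩, ?_, by abel⟩
        · have := congrArg (Subtype.val) hfhm
          push_cast at this
          exact this
        · -- x - fh is nilpotent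
          have hπf : π (fh : R) = fb := by
            have h3 : ρ (fh - ey) = 0 := hfhJ
            have h4 : π ((fh : R) - y) = 0 := by
              have : ρ (fh - ey) = π ((fh : R) - y) := by simp [ρ, hey]
              rw [← this, h3]
            rw [map_sub] at h4
            rw [sub_eq_zero.mp h4, hyπ]
          have hπn : π (x - (fh : R)) = nb := by
            rw [map_sub, hsum, hπf]; abel
          obtain ⟨k, hk⟩ := hnnil
          have hπnk : π ((x - (fh : R)) ^ k) = 0 := by rw [map_pow, hπn, hk]
          obtain ⟨j, hj⟩ := hInil 1 ((x - (fh : R)) ^ k)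
            (by simpa using hpow 1 _ hnmem k) hπnk
          exact ⟨k * j, by rw [pow_mul]; exact hj⟩
      · -- g ≠ 1 forces fb = 0, a contradiction
        exfalso
        obtain ⟨z, hz, hzπ'⟩ := hn
        have hzπ : π z = nb := hzπ'
        have hker : π (y + z - x) = 0 := by
          rw [map_sub, map_add, hyπ, hzπ, ← hsum, sub_self]
        have hcomp := hIhom _ hker 1
        by_cases hh' : h' = 1
        · subst hh'
          have hc : ((DirectSum.decompose ℛ (y + z - x) 1 : ℛ 1) : R) = y + z := by
            rw [DirectSum.decompose_sub, DirectSum.decompose_add, DirectSum.sub_apply,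
              DirectSum.add_apply, AddSubgroupClass.coe_sub, AddSubgroup.coe_add,
              DirectSum.decompose_of_mem_same ℛ hy, DirectSum.decompose_of_mem_same ℛ hz,
              DirectSum.decompose_of_mem_ne ℛ hx hg1, sub_zero]
          rw [hc, map_add, hyπ, hzπ] at hcomp
          apply hf0
          apply aux_mpot_nil hm hfm
          have : fb = -nb := eq_neg_of_add_eq_zero_left hcomp
          rw [this]
          exact hnnil.neg
        · have hc : ((DirectSum.decompose ℛ (y + z - x) 1 : ℛ 1) : R) = y := by
            rw [DirectSum.decompose_sub, DirectSum.decompose_add, DirectSum.sub_apply,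
              DirectSum.add_apply, AddSubgroupClass.coe_sub, AddSubgroup.coe_add,
              DirectSum.decompose_of_mem_same ℛ hy,
              DirectSum.decompose_of_mem_ne ℛ hz hh',
              DirectSum.decompose_of_mem_ne ℛ hx hg1, add_zero, sub_zero]
          rw [hc, hyπ] at hcomp
          exact hf0 hcomp
end

section
/- Let R be a G-graded ring with G finite of order n, and suppose R_g R_{g^{-1}} = 0 for every g ≠ e. If R_e is an m-nil clean ring, then R is a graded m-nil clean ring; in particular every homogeneous element of degree g ≠ e satisfies r^n = 0. -/
/-- if G is finite of order n, R_g R_{g⁻¹} = 0 for all g ≠ e, and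
R_e is m-nil clean, then R is graded m-nil clean; moreover every homogeneous
element of degree g ≠ e satisfies r^n = 0. -/
theorem stmt_11 {G R : Type*} [Group G] [Fintype G] [DecidableEq G] [Ring R]
    (ℛ : G → AddSubgroup R)
    (hinternal : DirectSum.IsInternal ℛ)
    (hone : (1 : R) ∈ ℛ 1)
    (hmul : ∀ g h : G, ∀ a b : R, a ∈ ℛ g → b ∈ ℛ h → a * b ∈ ℛ (g * h))
    (n : ℕ) (hn : Fintype.card G = n)
    (horth : ∀ g : G, g ≠ 1 → ∀ a ∈ ℛ g, ∀ b ∈ ℛ g⁻¹, a * b = 0)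
    (m : ℕ)
    (hRe : ∀ x ∈ ℛ 1, ∃ f n' : R, f ∈ ℛ 1 ∧ f ^ m = f ∧ n' ∈ ℛ 1 ∧
      IsNilpotent n' ∧ x = f + n') :
    GradedMNilClean ℛ m ∧ (∀ g : G, g ≠ 1 → ∀ r ∈ ℛ g, r ^ n = 0) := by
  -- powers of homogeneous elements are homogeneous
  have hpow : ∀ g : G, ∀ r ∈ ℛ g, ∀ k : ℕ, 1 ≤ k → r ^ k ∈ ℛ (g ^ k) := by
    intro g r hr k hk
    induction k with
    | zero => omega
    | succ k ih =>
      rcases Nat.eq_or_lt_of_le hk with h1 | h1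
      · simpa [← h1] using hr
      · have := hmul (g ^ k) g (r ^ k) r (ih (by omega)) hr
        simpa [pow_succ] using this
  -- the nilpotency claim
  have hnil : ∀ g : G, g ≠ 1 → ∀ r ∈ ℛ g, r ^ n = 0 := by
    intro g hg r hr
    set d := orderOf g with hd
    have hdpos : 0 < d := orderOf_pos g
    have hd2 : 2 ≤ d := by
      have h1 : d ≠ 1 := by
        intro h
        rw [hd] at h
        exact hg (orderOf_eq_one_iff.mp h)
      omega
    have hginv : g ^ (d - 1) = g⁻¹ := by
      have h2 : g ^ (d - 1) * g = 1 := by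
        rw [← pow_succ, Nat.sub_add_cancel (by omega)]
        exact pow_orderOf_eq_one g
      exact eq_inv_of_mul_eq_one_left h2
    -- r ^ d = 0
    have hrd : r ^ d = 0 := by
      have hmem : r ^ (d - 1) ∈ ℛ g⁻¹ := hginv ▸ hpow g r hr (d - 1) (by omega)
      have := horth g hg r hr (r ^ (d - 1)) hmem
      calc r ^ d = r * r ^ (d - 1) := by
            rw [← pow_succ', Nat.sub_add_cancel (by omega)]
        _ = 0 := this
    -- d ∣ n
    have hdvd : d ∣ n := hn ▸ orderOf_dvd_card
    obtain ⟨c, hc⟩ := hdvd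
    have hc1 : 1 ≤ c := by
      rcases Nat.eq_zero_or_pos c with h | h
      · subst h; simp at hc
        have : 0 < Fintype.card G := Fintype.card_pos
        omega
      · exact h
    rw [hc, pow_mul, hrd, zero_pow (by omega)]
  refine ⟨?_, hnil⟩
  intro g x hx
  by_cases hg : g = 1
  · subst hg
    obtain ⟨f, n', hf1, hfm, hn1, hnnil, hxe⟩ := hRe x hx
    exact ⟨f, n', ⟨1, hf1⟩, hfm, ⟨1, hn1⟩, hnnil, hxe⟩
  · by_cases hm : m = 0
    · -- degenerate case: R is the trivial ring
      obtain ⟨f, n', hf1, hfm, hn1, hnnil, hxe⟩ := hRe 0 (zero_mem _)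
      subst hm
      rw [pow_zero] at hfm
      have hn'eq : n' = -1 := by
        have h0 : (1 : R) + n' = 0 := by rw [hfm]; exact hxe.symm
        have := eq_neg_of_add_eq_zero_right h0
        simpa using this
      have h10 : (1 : R) = 0 := by
        obtain ⟨k, hk⟩ := hnnil
        rw [hn'eq] at hk
        have h1 : ((-1 : R)) ^ (2 * k) = 0 := by
          rw [two_mul, pow_add, hk, mul_zero]
        have h2 : ((-1 : R)) ^ (2 * k) = 1 := by
          rw [pow_mul]; simp
        rw [h1] at h2; exact h2.symm
      have hx0 : x = 0 := by
        calc x = x * 1 := (mul_one x).symm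
          _ = x * 0 := by rw [h10]
          _ = 0 := mul_zero x
      refine ⟨0, 0, ⟨1, zero_mem _⟩, ?_, ⟨1, zero_mem _⟩, ⟨1, by simp⟩, by simp [hx0]⟩
      rw [pow_zero, h10]
    · refine ⟨0, x, ⟨1, zero_mem _⟩, by simp [zero_pow hm], ⟨g, hx⟩, ⟨n, hnil g hg x hx⟩, by simp⟩
end

section
/- Let a be a strongly π-regular element of a ring R with (unique) strongly π-regular decomposition a = f + u. Then a is strongly m-nil clean if and only if there exists an m-potent g ∈ R commuting with f and u such that f - g + u is nilpotent. -/
/-- let a = f + u be a strongly π-regular decomposition (f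
idempotent, u a unit, af = fa, faf nilpotent).  Then a is strongly m-nil clean
iff there is an m-potent g commuting with f and u such that f - g + u is
nilpotent. -/
theorem stmt_12 {R : Type*} [Ring R] (m : ℕ) (hm : 2 ≤ m) (a f u : R)
    (hf : IsIdempotentElem f) (hu : IsUnit u) (ha : a = f + u)
    (hcomm : a * f = f * a) (hnil : IsNilpotent (f * a * f)) :
    (∃ g n : R, g ^ m = g ∧ IsNilpotent n ∧ g * n = n * g ∧ a = g + n) ↔
    (∃ g : R, g ^ m = g ∧ g * f = f * g ∧ g * u = u * g ∧ IsNilpotent (f - g + u)) := by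
  obtain ⟨U, rfl⟩ := hu
  set u : R := (U : R) with hUdef
  have caf : Commute a f := hcomm
  have huaf : u = a - f := by rw [ha]; abel
  have cuf : Commute u f := by rw [huaf]; exact caf.sub_left (Commute.refl f)
  have cua : Commute u a := by rw [huaf]; exact (Commute.refl a).sub_left caf.symm
  constructor
  · rintro ⟨g, n, hg, hn, hgn, hag⟩
    have cga : Commute g a := by
      rw [hag]; exact (Commute.refl g).add_right hgn
    -- a * f is nilpotent
    have e1 : f * a * f = a * f := by rw [← hcomm, mul_assoc, hf]
    rw [e1] at hnil
    obtain ⟨k, hk⟩ := hnil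
    set K := k + 1 with hKdef
    have hK : (a * f) ^ K = 0 := by rw [hKdef, pow_succ, hk, zero_mul]
    have haKf : a ^ K * f = 0 := by
      have := caf.mul_pow K
      rw [hf.pow_succ_eq k] at this
      rw [← this, hK]
    have hfaK : f * a ^ K = 0 := by
      rw [← (caf.symm.pow_right K).eq] at haKf; exact haKf
    -- a * (1 - f) = u * (1 - f)
    have h2 : a * (1 - f) = u * (1 - f) := by
      have h : a * (1 - f) = (f - f * f) + u * (1 - f) := by rw [ha]; noncomm_ring
      rw [hf, sub_self, zero_add] at h; exact h
    have c1fa : Commute a (1 - f) := (Commute.one_right a).sub_right caf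
    have c1fu : Commute u (1 - f) := (Commute.one_right u).sub_right cuf
    have h1fK : (1 - f) ^ K = 1 - f := hf.one_sub.pow_succ_eq k
    have h3 : (a * (1 - f)) ^ K = a ^ K := by
      rw [c1fa.mul_pow, h1fK, mul_sub, mul_one, haKf, sub_zero]
    have h5 : a ^ K = u ^ K * (1 - f) := by
      rw [← h3, h2, c1fu.mul_pow, h1fK]
    -- the inverse
    set w : R := ((U⁻¹ : Rˣ) : R) with hwdef
    have hwu : w * u = 1 := U.inv_mul
    have huw : u * w = 1 := U.mul_inv
    have cwf : Commute w f := Commute.units_inv_left cuf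
    have cwa : Commute w a := Commute.units_inv_left cua
    have cwu : Commute w u := by unfold Commute SemiconjBy; rw [hwu, huw]
    have hwKuK : w ^ K * u ^ K = 1 := by rw [← cwu.mul_pow, hwu, one_pow]
    have huKwK : u ^ K * w ^ K = 1 := by rw [← cwu.symm.mul_pow, huw, one_pow]
    have c1fwK : Commute (w ^ K) (1 - f) :=
      (((Commute.one_right w).sub_right cwf).pow_left K)
    have h6 : w ^ K * a ^ K = 1 - f := by
      rw [h5, ← mul_assoc, hwKuK, one_mul]
    have h7 : a ^ K * w ^ K = 1 - f := by
      rw [h5, mul_assoc, ← c1fwK.eq, ← mul_assoc, huKwK, one_mul]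
    -- f commutes with g
    have hfg1 : f * g * (1 - f) = 0 := by
      calc f * g * (1 - f) = f * g * (a ^ K * w ^ K) := by rw [h7]
        _ = f * (g * a ^ K) * w ^ K := by noncomm_ring
        _ = f * (a ^ K * g) * w ^ K := by rw [(cga.pow_right K).eq]
        _ = (f * a ^ K) * (g * w ^ K) := by noncomm_ring
        _ = 0 := by rw [hfaK, zero_mul]
    have hfg2 : (1 - f) * g * f = 0 := by
      calc (1 - f) * g * f = (w ^ K * a ^ K) * g * f := by rw [h6]
        _ = w ^ K * (a ^ K * g) * f := by noncomm_ring
        _ = w ^ K * (g * a ^ K) * f := by rw [(cga.pow_right K).eq]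
        _ = (w ^ K * g) * (a ^ K * f) := by noncomm_ring
        _ = 0 := by rw [haKf, mul_zero]
    have A : f * g = f * g * f := by
      rwa [mul_one_sub, sub_eq_zero] at hfg1
    have B : g * f = f * g * f := by
      rw [one_sub_mul, sub_mul, sub_eq_zero] at hfg2; exact hfg2
    have cgf : g * f = f * g := B.trans A.symm
    have cgu : g * u = u * g := by
      rw [huaf, mul_sub, sub_mul, cga.eq, cgf]
    refine ⟨g, hg, cgf, cgu, ?_⟩
    have hn' : f - g + u = n := by rw [huaf, hag]; abel
    rw [hn']; exact hn
  · rintro ⟨g, hg, hgf, hgu, hnilg⟩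
    refine ⟨g, f - g + u, hg, hnilg, ?_, by rw [ha]; abel⟩
    have key : g * (f - g + u) - (f - g + u) * g = (g * f - f * g) + (g * u - u * g) := by
      noncomm_ring
    rw [hgf, hgu, sub_self, sub_self, add_zero] at key
    exact sub_eq_zero.mp key
end

section
/- In the ring R of 2×2 upper triangular matrices over a finite field F with |F| = m and F ≠ Z_2, graded by Z_2 with R_0 the diagonal matrices and R_1 the strictly upper triangular matrices, R is graded m-nil clean but not graded nil clean (graded 2-nil clean). -/
/-- A 2×2 matrix is diagonal: the degree-0 component of the grading. -/
def IsDiag {F : Type*} [Field F] (M : Matrix (Fin 2) (Fin 2) F) : Prop :=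
  M 0 1 = 0 ∧ M 1 0 = 0

/-- A 2×2 matrix is strictly upper triangular: the degree-1 component. -/
def IsStrictUpper {F : Type*} [Field F] (M : Matrix (Fin 2) (Fin 2) F) : Prop :=
  M 0 0 = 0 ∧ M 1 0 = 0 ∧ M 1 1 = 0

/-- Homogeneous element of the ℤ₂-graded ring of upper triangular matrices. -/
def IsHomogTri {F : Type*} [Field F] (M : Matrix (Fin 2) (Fin 2) F) : Prop :=
  IsDiag M ∨ IsStrictUpper M

/-- Graded k-nil clean property for this grading: every homogeneous element is
a homogeneous k-potent plus a homogeneous nilpotent. -/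
def GradedKNilCleanTri (F : Type*) [Field F] (k : ℕ) : Prop :=
  ∀ M : Matrix (Fin 2) (Fin 2) F, IsHomogTri M →
    ∃ f n : Matrix (Fin 2) (Fin 2) F, IsHomogTri f ∧ f ^ k = f ∧
      IsHomogTri n ∧ IsNilpotent n ∧ M = f + n

lemma diag_pow00 {F : Type*} [Field F] (n : Matrix (Fin 2) (Fin 2) F)
    (h2 : n 1 0 = 0) (k : ℕ) : (n ^ k) 0 0 = (n 0 0) ^ k := by
  induction k with
  | zero => simp [Matrix.one_apply]
  | succ k ih =>
      rw [pow_succ, pow_succ, Matrix.mul_apply, Fin.sum_univ_two, ih, h2]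
      ring

/-- for a finite field F with |F| = m > 2, the ℤ₂-graded ring of
upper triangular 2×2 matrices over F (diagonal matrices in degree 0, strictly
upper triangular matrices in degree 1) is graded m-nil clean but not graded
nil clean (i.e. not graded 2-nil clean). -/
theorem stmt_13 {F : Type*} [Field F] [Fintype F] (m : ℕ)
    (hcard : Fintype.card F = m) (hm : 2 < m) :
    GradedKNilCleanTri F m ∧ ¬ GradedKNilCleanTri F 2 := by
  subst hcard
  constructor
  · intro M hM
    rcases hM with hd | hs
    · refine ⟨M, 0, Or.inl hd, ?_, Or.inl ⟨rfl, rfl⟩, ⟨1, by simp⟩, by simp⟩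
      have hMd : M = Matrix.diagonal ![M 0 0, M 1 1] := by
        ext i j
        fin_cases i <;> fin_cases j <;>
          simp [Matrix.diagonal, hd.1, hd.2]
      rw [hMd, Matrix.diagonal_pow]
      have hv : ![M 0 0, M 1 1] ^ Fintype.card F = ![M 0 0, M 1 1] := by
        funext i
        fin_cases i <;> simp [FiniteField.pow_card]
      rw [hv]
    · refine ⟨0, M, Or.inl ⟨rfl, rfl⟩, zero_pow Fintype.card_ne_zero, Or.inr hs,
        ⟨2, ?_⟩, by simp⟩
      ext i j
      fin_cases i <;> fin_cases j <;>
        simp [pow_two, Matrix.mul_apply, Fin.sum_univ_two, hs.1, hs.2.1, hs.2.2]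
  · intro h
    -- pick a ∉ {0,1}
    obtain ⟨a, ha0, ha1⟩ : ∃ a : F, a ≠ 0 ∧ a ≠ 1 := by
      classical
      by_contra hc
      push_neg at hc
      have hsub : (Finset.univ : Finset F) ⊆ {0, 1} := by
        intro x _
        rcases eq_or_ne x 0 with h0 | h0
        · simp [h0]
        · simp [hc x h0]
      have := Finset.card_le_card hsub
      have h2 : ({0, 1} : Finset F).card ≤ 2 := Finset.card_insert_le _ _ |>.trans (by simp)
      simp only [Finset.card_univ] at this
      omega
    obtain ⟨f, n, hf, hf2, hn, hnil, heq⟩ :=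
      h (Matrix.diagonal ![a, 0]) (Or.inl (by simp [IsDiag]))
    have hf10 : f 1 0 = 0 := by rcases hf with h | h; exacts [h.2, h.2.1]
    have hn00 : n 0 0 = 0 := by
      rcases hn with hnd | hns
      · obtain ⟨k, hk⟩ := hnil
        have hk00 : (n 0 0) ^ k = 0 := by
          rw [← diag_pow00 n hnd.2 k, hk]; rfl
        rcases Nat.eq_zero_or_pos k with rfl | hkpos
        · simp at hk00
        · exact pow_eq_zero_iff hkpos.ne' |>.mp hk00
      · exact hns.1
    have hf00 : f 0 0 = a := by
      have h00 := congrFun (congrFun heq 0) 0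
      simp [Matrix.add_apply, hn00] at h00
      exact h00.symm
    have hsq := congrFun (congrFun hf2 0) 0
    rw [pow_two, Matrix.mul_apply, Fin.sum_univ_two, hf10, hf00] at hsq
    simp at hsq
    have hz : a * (a - 1) = 0 := by ring_nf; linear_combination hsq
    rcases mul_eq_zero.mp hz with h | h
    · exact ha0 h
    · exact ha1 (sub_eq_zero.mp h)
end

section
/- Let R = A[X] be the polynomial ring over an m-nil clean ring A, Z-graded by R_i = A X^i for i ≥ 0 and R_i = 0 for i < 0. Then R is not a graded m-nil clean ring (the homogeneous element X is neither nilpotent nor the sum of a nonzero homogeneous m-potent and a homogeneous nilpotent). -/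
/-- over a nontrivial m-nil clean ring A, the polynomial ring
A[X] with its standard ℤ-grading is not graded m-nil clean: the homogeneous
element X admits no decomposition as a homogeneous m-potent plus a homogeneous
nilpotent. -/
theorem stmt_15 {A : Type*} [Ring A] [Nontrivial A] (m : ℕ) (hm : 2 ≤ m)
    (hA : ∀ a : A, ∃ f n : A, f ^ m = f ∧ IsNilpotent n ∧ a = f + n) :
    ¬ ∃ f n : Polynomial A,
        (∃ (i : ℕ) (a : A), f = Polynomial.monomial i a) ∧ f ^ m = f ∧
        (∃ (i : ℕ) (a : A), n = Polynomial.monomial i a) ∧ IsNilpotent n ∧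
        (Polynomial.X : Polynomial A) = f + n := by
  rintro ⟨f, n, ⟨i, c, rfl⟩, hf, ⟨j, a, rfl⟩, ⟨k, hk⟩, hX⟩
  rw [Polynomial.monomial_pow] at hf hk
  -- from nilpotency: a ^ k = 0
  have ha : a ^ k = 0 := by
    have := congrArg (fun p => Polynomial.coeff p (j * k)) hk
    simpa [Polynomial.coeff_monomial] using this
  -- if i = 1 then c = 0
  have hc : i = 1 → c = 0 := by
    intro hi
    subst hi
    have h := congrArg (fun p => Polynomial.coeff p 1) hf
    have hm1 : m ≠ 1 := by omega
    simpa [Polynomial.coeff_monomial, hm1] using h.symm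
  have h1 := congrArg (fun p => Polynomial.coeff p 1) hX
  simp only [Polynomial.coeff_X_one, Polynomial.coeff_add,
    Polynomial.coeff_monomial] at h1
  have ha1 : a = 1 := by
    by_cases hi : i = 1
    · by_cases hj : j = 1
      · simp [hi, hj, hc hi] at h1; exact h1.symm
      · simp [hi, hj, hc hi] at h1
    · by_cases hj : j = 1
      · simp [hi, hj] at h1; exact h1.symm
      · simp [hi, hj] at h1
  rw [ha1, one_pow] at ha
  exact one_ne_zero ha
end

section
/- A ring A is m-nil clean if and only if the matrix ring M_n(A), with its natural Z-grading by matrix diagonals (R_t spanned by the matrix units E_{i,i+t}), is a Z-graded m-nil clean ring. -/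
/-- A matrix is homogeneous of degree t in the natural ℤ-grading of M_n(A) by
diagonals: all entries off the t-th diagonal vanish. -/
def MatHomog {A : Type*} [Ring A] {n : ℕ} (t : ℤ) (M : Matrix (Fin n) (Fin n) A) : Prop :=
  ∀ i j : Fin n, (j : ℤ) - (i : ℤ) ≠ t → M i j = 0

lemma MatHomog.mul {A : Type*} [Ring A] {n : ℕ} {t s : ℤ}
    {M P : Matrix (Fin n) (Fin n) A} (hM : MatHomog t M) (hP : MatHomog s P) :
    MatHomog (t + s) (M * P) := by
  intro i j hij
  rw [Matrix.mul_apply]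
  apply Finset.sum_eq_zero
  intro k _
  by_cases hk : (k : ℤ) - (i : ℤ) = t
  · rw [hP k j (by omega), mul_zero]
  · rw [hM i k hk, zero_mul]

lemma MatHomog.one {A : Type*} [Ring A] {n : ℕ} :
    MatHomog 0 (1 : Matrix (Fin n) (Fin n) A) := by
  intro i j hij
  have hij' : i ≠ j := by
    intro h; exact hij (by simp [h])
  exact Matrix.one_apply_ne hij'

lemma MatHomog.pow {A : Type*} [Ring A] {n : ℕ} {t : ℤ}
    {M : Matrix (Fin n) (Fin n) A} (hM : MatHomog t M) (k : ℕ) :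
    MatHomog (k * t) (M ^ k) := by
  induction k with
  | zero => simpa using MatHomog.one
  | succ k ih =>
      have hcast : ((k + 1 : ℕ) : ℤ) * t = (k : ℤ) * t + t := by push_cast; ring
      rw [pow_succ, hcast]
      exact ih.mul hM

lemma diag_pow {A : Type*} [Ring A] {n : ℕ} {M : Matrix (Fin n) (Fin n) A}
    (hM : MatHomog 0 M) (k : ℕ) (i : Fin n) : (M ^ k) i i = (M i i) ^ k := by
  induction k with
  | zero => simp [Matrix.one_apply]
  | succ k ih =>
      rw [pow_succ, Matrix.mul_apply, Finset.sum_eq_single i]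
      · rw [ih, pow_succ]
      · intro b _ hb
        have hk : MatHomog 0 (M ^ k) := by simpa using hM.pow k
        have hb' : (b : ℤ) - (i : ℤ) ≠ 0 := by
          have : (b : ℕ) ≠ (i : ℕ) := fun h => hb (Fin.ext h)
          omega
        rw [hk i b (by omega), zero_mul]
      · intro h; exact absurd (Finset.mem_univ i) h

/-- A is m-nil clean iff M_n(A), with its natural ℤ-grading by
matrix diagonals, is a ℤ-graded m-nil clean ring. -/
theorem stmt_16 {A : Type*} [Ring A] (m n : ℕ) (hm : 2 ≤ m) (hn : 0 < n) :
    (∀ a : A, ∃ f nn : A, f ^ m = f ∧ IsNilpotent nn ∧ a = f + nn) ↔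
    (∀ (t : ℤ) (M : Matrix (Fin n) (Fin n) A), MatHomog t M →
      ∃ f N : Matrix (Fin n) (Fin n) A, (∃ s, MatHomog s f) ∧ f ^ m = f ∧
        (∃ s, MatHomog s N) ∧ IsNilpotent N ∧ M = f + N) := by
  constructor
  · intro h t M hM
    by_cases ht : t = 0
    · subst ht
      choose f nn hf hnil heq using h
      choose k hk using fun a => hnil a
      set F : Matrix (Fin n) (Fin n) A := Matrix.diagonal (fun i => f (M i i)) with hF
      set N : Matrix (Fin n) (Fin n) A := Matrix.diagonal (fun i => nn (M i i)) with hN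
      have hFh : MatHomog 0 F := by
        intro i j hij
        have : i ≠ j := by intro h'; exact hij (by simp [h'])
        exact Matrix.diagonal_apply_ne _ this
      have hNh : MatHomog 0 N := by
        intro i j hij
        have : i ≠ j := by intro h'; exact hij (by simp [h'])
        exact Matrix.diagonal_apply_ne _ this
      refine ⟨F, N, ⟨0, hFh⟩, ?_, ⟨0, hNh⟩, ?_, ?_⟩
      · ext i j
        by_cases hij : i = j
        · subst hij
          rw [diag_pow hFh m i]
          simp [hF, hf]
        · have h1 : (F ^ m) i j = 0 := by
            have := (hFh.pow m) i j
            simp only [mul_zero] at this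
            apply this
            intro hc
            exact hij (Fin.ext (by omega))
          rw [h1]
          exact (Matrix.diagonal_apply_ne (fun i => f (M i i)) hij).symm
      · refine ⟨Finset.univ.sup (fun i => k (M i i)), ?_⟩
        ext i j
        by_cases hij : i = j
        · subst hij
          rw [diag_pow hNh _ i]
          have hle : k (M i i) ≤ Finset.univ.sup (fun i => k (M i i)) :=
            Finset.le_sup (f := fun i => k (M i i)) (Finset.mem_univ i)
          have : nn (M i i) ^ Finset.univ.sup (fun i => k (M i i)) = 0 := by
            rw [← Nat.add_sub_cancel' hle, pow_add, hk, zero_mul]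
          simp [hN, Matrix.diagonal_apply_eq, this]
        · have := (hNh.pow (Finset.univ.sup (fun i => k (M i i)))) i j
          simp only [mul_zero] at this
          rw [this (by intro hc; exact hij (Fin.ext (by omega)))]
          simp
      · ext i j
        by_cases hij : i = j
        · subst hij
          simp [hF, hN, Matrix.diagonal_apply_eq, ← heq]
        · rw [hM i j (by intro hc; exact hij (Fin.ext (by omega)))]
          have e1 : F i j = 0 := Matrix.diagonal_apply_ne _ hij
          have e2 : N i j = 0 := Matrix.diagonal_apply_ne _ hij
          rw [Matrix.add_apply, e1, e2, add_zero]
    · refine ⟨0, M, ⟨0, fun i j _ => rfl⟩, ?_, ⟨t, hM⟩, ⟨n, ?_⟩, (zero_add M).symm⟩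
      · rw [zero_pow (by omega)]
      · ext i j
        have hnt : ((j : ℤ) - (i : ℤ)) ≠ (n : ℤ) * t := by
          have h1 : 1 ≤ |t| := Int.one_le_abs (by exact_mod_cast ht)
          have h2 : |(n : ℤ) * t| = (n : ℤ) * |t| := by
            rw [abs_mul, abs_of_nonneg (by positivity)]
          have h3 : (n : ℤ) ≤ |(n : ℤ) * t| := by
            rw [h2]; nlinarith [Int.ofNat_le.mpr hn.le]
          have hi : (i : ℤ) < n := by exact_mod_cast i.isLt
          have hj : (j : ℤ) < n := by exact_mod_cast j.isLt
          have hi0 : 0 ≤ (i : ℤ) := Int.ofNat_nonneg _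
          have hj0 : 0 ≤ (j : ℤ) := Int.ofNat_nonneg _
          intro hc
          rw [← hc] at h3
          have habs : |(j : ℤ) - (i : ℤ)| < (n : ℤ) := abs_lt.mpr ⟨by omega, by omega⟩
          exact absurd h3 (not_le.mpr habs)
        rw [(hM.pow n) i j hnt]
        simp
  · intro h a
    have hdiag : MatHomog 0 (Matrix.diagonal (fun _ : Fin n => a)) := by
      intro i j hij
      have : i ≠ j := by intro h'; exact hij (by simp [h'])
      exact Matrix.diagonal_apply_ne _ this
    obtain ⟨f, N, ⟨s, hfs⟩, hfm, ⟨s', hNs⟩, ⟨k, hk⟩, heq⟩ := h 0 _ hdiag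
    set i0 : Fin n := ⟨0, hn⟩
    refine ⟨f i0 i0, N i0 i0, ?_, ?_, ?_⟩
    · by_cases hs : s = 0
      · subst hs
        rw [← diag_pow hfs m i0, hfm]
      · rw [hfs i0 i0 (by simpa using fun h' => hs h'.symm)]
        rw [zero_pow (by omega)]
    · by_cases hs : s' = 0
      · subst hs
        exact ⟨k, by rw [← diag_pow hNs k i0, hk]; simp⟩
      · rw [hNs i0 i0 (by simpa using fun h' => hs h'.symm)]
        exact ⟨1, by simp⟩
    · have := congrFun (congrFun heq i0) i0
      simpa [Matrix.diagonal_apply_eq] using this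
end

section
/- Let A and B be commutative G-graded rings, f : A → B a graded ring homomorphism, J a homogeneous ideal of B, and G an (m-1)-torsion free group. Then the amalgamation A ⋈^f J = {(a, f(a)+j) : a ∈ A, j ∈ J} with grading (A ⋈^f J)_g = {(a_g, f(a_g)+j_g) : a_g ∈ A_g, j_g ∈ J_g} is a graded m-nil clean ring if and only if A and f(A)+J are graded m-nil clean rings. -/
/-- Degree-g component of the amalgamation A ⋈^f J ⊆ A × B:
pairs (a, f(a)+j) with a homogeneous of degree g and j a homogeneous element
of J of degree g. -/
def AmalgMem {G A B : Type*} [CommRing A] [CommRing B] (𝒜 : G → AddSubgroup A)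
    (ℬ : G → AddSubgroup B) (f : A →+* B) (J : Ideal B) (g : G) (p : A × B) : Prop :=
  p.1 ∈ 𝒜 g ∧ ∃ j ∈ J, j ∈ ℬ g ∧ p.2 = f p.1 + j

/-- Degree-g component of the subring f(A) + J of B. -/
def ImageMem {G A B : Type*} [CommRing A] [CommRing B] (𝒜 : G → AddSubgroup A)
    (ℬ : G → AddSubgroup B) (f : A →+* B) (J : Ideal B) (g : G) (b : B) : Prop :=
  ∃ a ∈ 𝒜 g, ∃ j ∈ J, j ∈ ℬ g ∧ b = f a + j

/- ------------------ auxiliary lemmas ------------------- -/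

lemma aux_nil_mul {R : Type*} [CommRing R] {x : R} (hx : IsNilpotent x) (y : R) :
    IsNilpotent (y * x) := by
  obtain ⟨n, hn⟩ := hx
  exact ⟨n, by rw [mul_pow, hn, mul_zero]⟩

lemma aux_nil_mul' {R : Type*} [CommRing R] {x : R} (hx : IsNilpotent x) (y : R) :
    IsNilpotent (x * y) := by
  rw [mul_comm]; exact aux_nil_mul hx y

lemma aux_nil_add {R : Type*} [CommRing R] {x y : R} (hx : IsNilpotent x)
    (hy : IsNilpotent y) : IsNilpotent (x + y) :=
  (Commute.all x y).isNilpotent_add hx hy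

lemma aux_nil_pow {R : Type*} [CommRing R] {x : R} (hx : IsNilpotent x) (n : ℕ) :
    IsNilpotent (x ^ (n + 1)) := by
  obtain ⟨k, hk⟩ := hx
  exact ⟨k, by rw [← pow_mul, mul_comm, pow_mul, hk, zero_pow (Nat.succ_ne_zero n)]⟩

lemma aux_nil_pair {A B : Type*} [CommRing A] [CommRing B] {x : A} {y : B}
    (hx : IsNilpotent x) (hy : IsNilpotent y) : IsNilpotent ((x, y) : A × B) := by
  obtain ⟨n, hn⟩ := hx
  obtain ⟨k, hk⟩ := hy
  refine ⟨n + k, ?_⟩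
  have h1 : ((x, y) : A × B) ^ (n + k) = (x ^ (n + k), y ^ (n + k)) := rfl
  rw [h1, pow_add, hn, zero_mul, pow_add, hk, mul_zero]
  rfl

/-- x = e + n with e m-potent and n nilpotent gives x^m - x nilpotent. -/
lemma aux_pow_sub_nil {R : Type*} [CommRing R] {x e n : R} {m : ℕ}
    (hx : x = e + n) (he : e ^ m = e) (hn : IsNilpotent n) :
    IsNilpotent (x ^ m - x) := by
  have hxe : x - e = n := by rw [hx]; ring
  obtain ⟨t, ht⟩ := sub_dvd_pow_sub_pow x e m
  have h2 : x ^ m - x = (x - e) * t + -n := by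
    rw [← ht, he, hx]; ring
  rw [h2, hxe]
  exact aux_nil_add (aux_nil_mul' hn t) hn.neg

/-- elements homogeneous of two distinct degrees vanish -/
lemma aux_homog_eq_zero {G R : Type*} [Group G] [DecidableEq G] [CommRing R]
    (𝒜 : G → AddSubgroup R) [DirectSum.Decomposition 𝒜] {x : R} {g h : G}
    (hg : x ∈ 𝒜 g) (hh : x ∈ 𝒜 h) (hne : g ≠ h) : x = 0 := by
  have h1 := DirectSum.decompose_of_mem_same 𝒜 hh
  have h2 := DirectSum.decompose_of_mem_ne 𝒜 hg hne
  rw [h2] at h1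
  exact h1.symm

lemma aux_pow_mem {G R : Type*} [Group G] [CommRing R] (𝒜 : G → AddSubgroup R)
    (hmul : ∀ g h : G, ∀ a b : R, a ∈ 𝒜 g → b ∈ 𝒜 h → a * b ∈ 𝒜 (g * h))
    {x : R} {g : G} (hx : x ∈ 𝒜 g) : ∀ n : ℕ, x ^ (n + 1) ∈ 𝒜 (g ^ (n + 1)) := by
  intro n
  induction n with
  | zero => simpa using hx
  | succ k ih =>
      have := hmul _ _ _ _ ih hx
      rw [pow_succ x (k + 1), pow_succ g (k + 1)]
      exact this

/-- a homogeneous m-potent is of degree 1 -/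
lemma aux_mpotent_deg_one {G R : Type*} [Group G] [DecidableEq G] [CommRing R]
    (𝒜 : G → AddSubgroup R) [DirectSum.Decomposition 𝒜]
    (hmul : ∀ g h : G, ∀ a b : R, a ∈ 𝒜 g → b ∈ 𝒜 h → a * b ∈ 𝒜 (g * h))
    {m : ℕ} (hm : 2 ≤ m) (htf : ∀ g : G, g ^ (m - 1) = 1 → g = 1)
    {x : R} {g : G} (hx : x ∈ 𝒜 g) (hxm : x ^ m = x) : x ∈ 𝒜 1 := by
  by_cases hx0 : x = 0
  · rw [hx0]; exact zero_mem _
  · obtain ⟨k, hk⟩ : ∃ k, m = k + 1 := ⟨m - 1, by omega⟩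
    have hpow : x ^ m ∈ 𝒜 (g ^ m) := by
      rw [hk]; exact aux_pow_mem 𝒜 hmul hx k
    rw [hxm] at hpow
    by_cases hgg : g ^ m = g
    · have h1 : g ^ (m - 1) * g = 1 * g := by
        rw [one_mul, ← pow_succ]
        have hmm : m - 1 + 1 = m := by omega
        rw [hmm, hgg]
      have h2 : g ^ (m - 1) = 1 := mul_right_cancel h1
      have h3 := htf g h2
      rwa [h3] at hx
    · exact absurd (aux_homog_eq_zero 𝒜 hpow hx hgg) hx0

/-- case g ≠ 1 : a homogeneous element which decomposes is nilpotent -/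
lemma aux_homog_nilpotent {G R : Type*} [Group G] [DecidableEq G] [CommRing R]
    (𝒜 : G → AddSubgroup R) [DirectSum.Decomposition 𝒜]
    {x q r : R} {g h' : G}
    (hx : x ∈ 𝒜 g) (hg : g ≠ 1) (hq1 : q ∈ 𝒜 1) (hr : r ∈ 𝒜 h')
    (heq : x = q + r) (hrn : IsNilpotent r) : IsNilpotent x := by
  by_cases hh' : h' = 1
  · subst hh'
    have hx1 : x ∈ 𝒜 1 := heq ▸ add_mem hq1 hr
    have hx0 : x = 0 := aux_homog_eq_zero 𝒜 hx hx1 hg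
    exact ⟨1, by simp [hx0]⟩
  · have hd1 : (DirectSum.decompose 𝒜 x 1 : R) = 0 :=
      DirectSum.decompose_of_mem_ne 𝒜 hx hg
    have hsplit : (DirectSum.decompose 𝒜 x 1 : R) =
        (DirectSum.decompose 𝒜 q 1 : R) + (DirectSum.decompose 𝒜 r 1 : R) := by
      rw [heq, DirectSum.decompose_add, DirectSum.add_apply]
      rfl
    rw [hd1, DirectSum.decompose_of_mem_same 𝒜 hq1,
      DirectSum.decompose_of_mem_ne 𝒜 hr hh', add_zero] at hsplit
    have hxr : x = r := by rw [heq, ← hsplit, zero_add]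
    rwa [hxr]

lemma aux_idem_pow {R : Type*} [CommRing R] {e : R} (he : e * e = e) :
    ∀ n : ℕ, e ^ (n + 1) = e := by
  intro n
  induction n with
  | zero => simp
  | succ k ih => rw [pow_succ, ih, he]

lemma aux_orth_pow {R : Type*} [CommRing R] {u v : R} (huv : u * v = 0) :
    ∀ n : ℕ, (u + v) ^ (n + 1) = u ^ (n + 1) + v ^ (n + 1) := by
  intro n
  induction n with
  | zero => simp
  | succ k ih =>
      rw [pow_succ, ih]
      calc (u ^ (k + 1) + v ^ (k + 1)) * (u + v)
          = u ^ (k + 2) + v ^ (k + 2) + (u ^ k * (u * v) + v ^ k * (u * v)) := by ring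
        _ = u ^ (k + 2) + v ^ (k + 2) := by rw [huv]; ring

/-- idempotent lifting by Newton iteration, staying inside an additive
subgroup closed under multiplication and inside the ideal J. -/
lemma aux_idem_lift {R : Type*} [CommRing R] (S1 : AddSubgroup R)
    (hS1 : ∀ x y : R, x ∈ S1 → y ∈ S1 → x * y ∈ S1) (J : Ideal R) {θ : R}
    (hθ1 : θ ∈ S1) (hθJ : θ ∈ J) (hθn : IsNilpotent (θ * θ - θ)) :
    ∃ ι : R, ι * ι = ι ∧ ι ∈ S1 ∧ ι ∈ J ∧ IsNilpotent (θ - ι) := by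
  obtain ⟨K, hK⟩ := hθn
  set δ := θ * θ - θ with hδ
  let F : R → R := fun x => (x * x + x * x + x * x) - (x * x * x + x * x * x)
  let seq : ℕ → R := fun t => Nat.rec θ (fun _ x => F x) t
  have key : ∀ t : ℕ, seq t ∈ S1 ∧ seq t ∈ J ∧ IsNilpotent (seq t - θ) ∧
      ∃ y : R, seq t * seq t - seq t = δ ^ (2 ^ t) * y := by
    intro t
    induction t with
    | zero =>
        refine ⟨hθ1, hθJ, ⟨1, ?_⟩, 1, ?_⟩
        · show (θ - θ) ^ 1 = 0
          simp
        · show θ * θ - θ = δ ^ 2 ^ 0 * 1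
          simp [hδ]
    | succ k ih =>
        obtain ⟨h1, h2, h3, y, hy⟩ := ih
        have hseqS : seq (k + 1) = F (seq k) := rfl
        set x := seq k with hx
        have hδnil : IsNilpotent δ := ⟨K, hK⟩
        obtain ⟨k0, hk0⟩ : ∃ k0, 2 ^ k = k0 + 1 :=
          ⟨2 ^ k - 1, by have := pow_pos (show 0 < 2 by norm_num) k; omega⟩
        have hβnil : IsNilpotent (x * x - x) := by
          rw [hy, hk0]
          exact aux_nil_mul' (aux_nil_pow hδnil k0) y
        refine ⟨?_, ?_, ?_, ?_⟩
        · rw [hseqS]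
          exact sub_mem (add_mem (add_mem (hS1 _ _ h1 h1) (hS1 _ _ h1 h1)) (hS1 _ _ h1 h1))
            (add_mem (hS1 _ _ (hS1 _ _ h1 h1) h1) (hS1 _ _ (hS1 _ _ h1 h1) h1))
        · rw [hseqS]
          exact sub_mem (add_mem (add_mem (J.mul_mem_right _ h2) (J.mul_mem_right _ h2))
              (J.mul_mem_right _ h2))
            (add_mem (J.mul_mem_right _ (J.mul_mem_right _ h2))
              (J.mul_mem_right _ (J.mul_mem_right _ h2)))
        · rw [hseqS]
          have hid : F x - θ = (x * x - x) * (1 - (x + x)) + (x - θ) := by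
            show ((x * x + x * x + x * x) - (x * x * x + x * x * x)) - θ = _
            ring
          rw [hid]
          exact aux_nil_add (aux_nil_mul' hβnil _) h3
        · refine ⟨y * y * ((x * x + x * x + x * x + x * x) - (x + x + x + x) - 3), ?_⟩
          have h2p : (2 : ℕ) ^ (k + 1) = 2 ^ k + 2 ^ k := by
            rw [pow_succ]; omega
          rw [hseqS]
          calc F x * F x - F x
              = (x * x - x) * (x * x - x) *
                  ((x * x + x * x + x * x + x * x) - (x + x + x + x) - 3) := by
                show ((x * x + x * x + x * x) - (x * x * x + x * x * x)) *
                    ((x * x + x * x + x * x) - (x * x * x + x * x * x)) -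
                    ((x * x + x * x + x * x) - (x * x * x + x * x * x)) = _
                ring
            _ = (δ ^ 2 ^ k * y) * (δ ^ 2 ^ k * y) *
                  ((x * x + x * x + x * x + x * x) - (x + x + x + x) - 3) := by rw [← hy]
            _ = δ ^ (2 ^ k + 2 ^ k) *
                  (y * y * ((x * x + x * x + x * x + x * x) - (x + x + x + x) - 3)) := by
                rw [pow_add]; ring
            _ = δ ^ 2 ^ (k + 1) *
                  (y * y * ((x * x + x * x + x * x + x * x) - (x + x + x + x) - 3)) := by
                rw [h2p]
  obtain ⟨hS, hJ, hnil, y, hy⟩ := key K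
  have hδK : δ ^ 2 ^ K = 0 := by
    have hle : K ≤ 2 ^ K := Nat.le_of_lt (Nat.lt_two_pow_self (n := K))
    have : δ ^ 2 ^ K = δ ^ K * δ ^ (2 ^ K - K) := by
      rw [← pow_add]
      congr 1
      omega
    rw [this, hK, zero_mul]
  refine ⟨seq K, ?_, hS, hJ, ?_⟩
  · have : seq K * seq K - seq K = 0 := by rw [hy, hδK, zero_mul]
    exact sub_eq_zero.mp this
  · have : θ - seq K = -(seq K - θ) := by ring
    rw [this]
    exact hnil.neg

/-- for commutative G-graded rings A, B, a graded ring
homomorphism f : A → B, a homogeneous ideal J of B, and G an (m-1)-torsion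
free group, the amalgamation A ⋈^f J is graded m-nil clean iff A and f(A)+J
are graded m-nil clean. -/
theorem stmt_18 {G A B : Type*} [Group G] [DecidableEq G] [CommRing A] [CommRing B]
    (𝒜 : G → AddSubgroup A) (ℬ : G → AddSubgroup B)
    [DirectSum.Decomposition 𝒜] [DirectSum.Decomposition ℬ]
    (hAone : (1 : A) ∈ 𝒜 1)
    (hAmul : ∀ g h : G, ∀ a b : A, a ∈ 𝒜 g → b ∈ 𝒜 h → a * b ∈ 𝒜 (g * h))
    (hBone : (1 : B) ∈ ℬ 1)
    (hBmul : ∀ g h : G, ∀ a b : B, a ∈ ℬ g → b ∈ ℬ h → a * b ∈ ℬ (g * h))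
    (m : ℕ) (hm : 2 ≤ m)
    (htf : ∀ g : G, g ^ (m - 1) = 1 → g = 1)
    (f : A →+* B) (hf : ∀ g : G, ∀ a ∈ 𝒜 g, f a ∈ ℬ g)
    (J : Ideal B)
    (hJhom : ∀ b ∈ J, ∀ g : G, (DirectSum.decompose ℬ b g : B) ∈ J) :
    (∀ g : G, ∀ p : A × B, AmalgMem 𝒜 ℬ f J g p →
      ∃ q r : A × B, (∃ h, AmalgMem 𝒜 ℬ f J h q) ∧ q ^ m = q ∧
        (∃ h, AmalgMem 𝒜 ℬ f J h r) ∧ IsNilpotent r ∧ p = q + r) ↔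
    ((∀ g : G, ∀ a ∈ 𝒜 g, ∃ q r : A, (∃ h, q ∈ 𝒜 h) ∧ q ^ m = q ∧
        (∃ h, r ∈ 𝒜 h) ∧ IsNilpotent r ∧ a = q + r) ∧
     (∀ g : G, ∀ b : B, ImageMem 𝒜 ℬ f J g b →
      ∃ q r : B, (∃ h, ImageMem 𝒜 ℬ f J h q) ∧ q ^ m = q ∧
        (∃ h, ImageMem 𝒜 ℬ f J h r) ∧ IsNilpotent r ∧ b = q + r)) := by
  constructor
  · -- forward direction
    intro H
    constructor
    · intro g a ha
      obtain ⟨q, r, ⟨h, hq⟩, hqm, ⟨h', hr⟩, hrn, hpqr⟩ :=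
        H g (a, f a) ⟨ha, 0, J.zero_mem, zero_mem _, by simp⟩
      refine ⟨q.1, r.1, ⟨h, hq.1⟩, congrArg Prod.fst hqm, ⟨h', hr.1⟩,
        hrn.map (RingHom.fst A B), congrArg Prod.fst hpqr⟩
    · intro g b hb
      obtain ⟨a, ha, j, hjJ, hjB, hbeq⟩ := hb
      obtain ⟨q, r, ⟨h, hq⟩, hqm, ⟨h', hr⟩, hrn, hpqr⟩ :=
        H g (a, b) ⟨ha, j, hjJ, hjB, hbeq⟩
      obtain ⟨hq1, jq, hjqJ, hjqB, hq2⟩ := hq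
      obtain ⟨hr1, jr, hjrJ, hjrB, hr2⟩ := hr
      exact ⟨q.2, r.2, ⟨h, q.1, hq1, jq, hjqJ, hjqB, hq2⟩, congrArg Prod.snd hqm,
        ⟨h', r.1, hr1, jr, hjrJ, hjrB, hr2⟩, hrn.map (RingHom.snd A B),
        congrArg Prod.snd hpqr⟩
  · -- backward direction
    rintro ⟨HA, HS⟩ g p hp
    obtain ⟨ha, j, hjJ, hjB, hb⟩ := hp
    by_cases hg : g = 1
    · -- main case : degree one
      subst hg
      obtain ⟨q, r0, ⟨h, hqh⟩, hqm, _, hrn, heqA⟩ := HA 1 p.1 ha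
      have hq1 : q ∈ 𝒜 1 := aux_mpotent_deg_one 𝒜 hAmul hm htf hqh hqm
      have hr0 : p.1 - q = r0 := by rw [heqA]; ring
      have hrnil : IsNilpotent (p.1 - q) := by rw [hr0]; exact hrn
      have hbmem : ImageMem 𝒜 ℬ f J 1 p.2 := ⟨p.1, ha, j, hjJ, hjB, hb⟩
      obtain ⟨e, n, ⟨h2, he⟩, hem, _, hnn, hben⟩ := HS 1 p.2 hbmem
      obtain ⟨a2, ha2, j2, hj2J, hj2B, heeq⟩ := he
      have heB : e ∈ ℬ h2 := heeq ▸ add_mem (hf h2 a2 ha2) hj2B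
      have he1 : e ∈ ℬ 1 := aux_mpotent_deg_one ℬ hBmul hm htf heB hem
      have hnnil : IsNilpotent (p.2 - e) := by
        have hpe : p.2 - e = n := by rw [hben]; ring
        rw [hpe]; exact hnn
      -- j^m - j is nilpotent
      obtain ⟨ej, nj, _, hejm, _, hnjn, hjeq⟩ :=
        HS 1 j ⟨0, zero_mem _, j, hjJ, hjB, by simp⟩
      have hjmn : IsNilpotent (j ^ m - j) := aux_pow_sub_nil hjeq hejm hnjn
      -- the idempotent ι
      set θ := j ^ (m - 1) with hθ
      obtain ⟨k1, hk1⟩ : ∃ k1, m - 1 = k1 + 1 := ⟨m - 2, by omega⟩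
      have hθ1 : θ ∈ ℬ 1 := by
        rw [hθ, hk1]
        simpa using aux_pow_mem ℬ hBmul hjB k1
      have hθJ : θ ∈ J := by
        rw [hθ, hk1, pow_succ]
        exact J.mul_mem_left _ hjJ
      have hθθ : θ * θ - θ = j ^ (m - 2) * (j ^ m - j) := by
        have e1 : (m - 1) + (m - 1) = (m - 2) + m := by omega
        have e2 : m - 1 = (m - 2) + 1 := by omega
        calc θ * θ - θ = j ^ ((m - 1) + (m - 1)) - j ^ (m - 1) := by rw [hθ, ← pow_add]
          _ = j ^ ((m - 2) + m) - j ^ ((m - 2) + 1) := by rw [e1, e2]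
          _ = j ^ (m - 2) * (j ^ m - j) := by rw [pow_add, pow_add, pow_one, mul_sub]
      have hθnil : IsNilpotent (θ * θ - θ) := by
        rw [hθθ]; exact aux_nil_mul hjmn _
      obtain ⟨ι, hιι, hι1, hιJ, hιθ⟩ :=
        aux_idem_lift (ℬ 1) (fun x y hx hy => by simpa using hBmul 1 1 x y hx hy)
          J hθ1 hθJ hθnil
      -- the m-potent part
      set c := f q + ι * (e - f q) with hc
      have hfq1 : f q ∈ ℬ 1 := hf 1 q hq1
      have hιe1 : ι * (e - f q) ∈ ℬ 1 := by
        simpa using hBmul 1 1 ι (e - f q) hι1 (sub_mem he1 hfq1)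
      have hcm : c ^ m = c := by
        obtain ⟨k, hk⟩ : ∃ k, m = k + 1 := ⟨m - 1, by omega⟩
        have hsplit : c = (1 - ι) * f q + ι * e := by rw [hc]; ring
        have hzero : (1 - ι) * ι = 0 := by
          rw [sub_mul, one_mul, hιι, sub_self]
        have horth : ((1 - ι) * f q) * (ι * e) = 0 := by
          calc ((1 - ι) * f q) * (ι * e) = ((1 - ι) * ι) * (f q * e) := by ring
            _ = 0 := by rw [hzero, zero_mul]
        have h1ι : (1 - ι) * (1 - ι) = 1 - ι := by
          calc (1 - ι) * (1 - ι) = 1 - ι - ((1 - ι) * ι) := by ring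
            _ = 1 - ι := by rw [hzero, sub_zero]
        have hfqp : (f q) ^ (k + 1) = f q := by rw [← hk, ← map_pow, hqm]
        have hep : e ^ (k + 1) = e := by rw [← hk, hem]
        rw [hsplit, hk, aux_orth_pow horth k, mul_pow, mul_pow,
          aux_idem_pow h1ι k, aux_idem_pow hιι k, hfqp, hep]
      refine ⟨(q, c), (p.1 - q, f (p.1 - q) + (j - ι * (e - f q))), ?_, ?_, ?_, ?_, ?_⟩
      · exact ⟨1, hq1, ι * (e - f q), J.mul_mem_right _ hιJ, hιe1, rfl⟩
      · have h1 : ((q, c) : A × B) ^ m = (q ^ m, c ^ m) := rfl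
        rw [h1, hqm, hcm]
      · exact ⟨1, sub_mem ha hq1, j - ι * (e - f q),
          sub_mem hjJ (J.mul_mem_right _ hιJ), sub_mem hjB hιe1, rfl⟩
      · refine aux_nil_pair hrnil ?_
        have hjθm : j * θ = j ^ m := by
          have hmm : (m - 1) + 1 = m := by omega
          rw [hθ, mul_comm, ← pow_succ, hmm]
        have hkey : f (p.1 - q) + (j - ι * (e - f q)) =
            (f p.1 - f q) + (j - j * θ) + (j * θ - j * ι) + ι * (p.2 - e) +
              (-(ι * (f p.1 - f q))) := by
          rw [map_sub, hb]; ring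
        rw [hkey]
        have N1 : IsNilpotent (f p.1 - f q) := by
          have : f p.1 - f q = f (p.1 - q) := (map_sub f p.1 q).symm
          rw [this]; exact hrnil.map f
        have N2 : IsNilpotent (j - j * θ) := by
          have : j - j * θ = -(j ^ m - j) := by rw [hjθm]; ring
          rw [this]; exact hjmn.neg
        have N3 : IsNilpotent (j * θ - j * ι) := by
          have : j * θ - j * ι = j * (θ - ι) := by ring
          rw [this]; exact aux_nil_mul hιθ j
        have N4 : IsNilpotent (ι * (p.2 - e)) := aux_nil_mul hnnil ι
        have N5 : IsNilpotent (-(ι * (f p.1 - f q))) := (aux_nil_mul N1 ι).neg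
        exact aux_nil_add (aux_nil_add (aux_nil_add (aux_nil_add N1 N2) N3) N4) N5
      · have hsum : ((q, c) : A × B) + (p.1 - q, f (p.1 - q) + (j - ι * (e - f q))) =
            (q + (p.1 - q), c + (f (p.1 - q) + (j - ι * (e - f q)))) := rfl
        rw [hsum]
        have hfst : p.1 = q + (p.1 - q) := by ring
        have hsnd : p.2 = c + (f (p.1 - q) + (j - ι * (e - f q))) := by
          rw [hc, map_sub, hb]; ring
        exact Prod.ext hfst hsnd
    · -- case g ≠ 1 : p is nilpotent
      obtain ⟨q, r, ⟨h, hqh⟩, hqm, ⟨h', hrh⟩, hrn, heq⟩ := HA g p.1 ha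
      have hq1 : q ∈ 𝒜 1 := aux_mpotent_deg_one 𝒜 hAmul hm htf hqh hqm
      have hanil : IsNilpotent p.1 := aux_homog_nilpotent 𝒜 ha hg hq1 hrh heq hrn
      have hbmem : ImageMem 𝒜 ℬ f J g p.2 := ⟨p.1, ha, j, hjJ, hjB, hb⟩
      obtain ⟨e, n, ⟨h2, he⟩, hem, ⟨h3, hn⟩, hnn, hben⟩ := HS g p.2 hbmem
      obtain ⟨a2, ha2, j2, hj2J, hj2B, heeq⟩ := he
      have heB : e ∈ ℬ h2 := heeq ▸ add_mem (hf h2 a2 ha2) hj2B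
      have he1 : e ∈ ℬ 1 := aux_mpotent_deg_one ℬ hBmul hm htf heB hem
      obtain ⟨a3, ha3, j3, hj3J, hj3B, hneq⟩ := hn
      have hnB : n ∈ ℬ h3 := hneq ▸ add_mem (hf h3 a3 ha3) hj3B
      have hpB : p.2 ∈ ℬ g := hb ▸ add_mem (hf g p.1 ha) hjB
      have hbnil : IsNilpotent p.2 := aux_homog_nilpotent ℬ hpB hg he1 hnB hben hnn
      refine ⟨0, p, ⟨1, zero_mem _, 0, J.zero_mem, zero_mem _, by simp⟩,
        zero_pow (by omega), ⟨g, ha, j, hjJ, hjB, hb⟩, ?_, by simp⟩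
      have hpp : p = (p.1, p.2) := rfl
      rw [hpp]
      exact aux_nil_pair hanil hbnil
end

section
/- In a commutative ring S, if every element is the sum of an m-potent and a nilpotent (S is m-nil clean), then for every x ∈ S the element x^m - x is nilpotent; conversely, if x^m - x is nilpotent for every x and m-1 is a unit, then S is m-nil clean. -/
private lemma unit_aux {S : Type*} [CommRing S] {m : ℕ} (hm : 2 ≤ m)
    (hu : IsUnit ((m : S) - 1)) {x : S} (hz : IsNilpotent (x ^ m - x)) :
    IsUnit ((m : S) * x ^ (m - 1) - 1) := by
  set e : S := x ^ (m - 1) with he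
  set u : S := ↑hu.unit⁻¹ with hud
  have h1 : u * ((m : S) - 1) = 1 := by
    rw [hud]
    exact_mod_cast hu.unit.inv_mul
  have hd : e * e - e = x ^ (m - 2) * (x ^ m - x) := by
    have e1 : e * e = x ^ (m - 2) * x ^ m := by
      rw [he, ← pow_add, ← pow_add]; congr 1; omega
    have e2 : e = x ^ (m - 2) * x := by
      rw [he, ← pow_succ]; congr 1; omega
    rw [mul_sub, ← e1, ← e2]
  have hdn : IsNilpotent (e * e - e) := by
    rw [hd]; exact (Commute.all _ _).isNilpotent_mul_left hz
  have key : ((m : S) * e - 1) * (u * e + e - 1) = 1 + ((m : S) * u + m) * (e * e - e) := by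
    ring_nf
    linear_combination e * h1
  have : IsUnit (((m : S) * e - 1) * (u * e + e - 1)) := by
    rw [key]
    exact ((Commute.all _ _).isNilpotent_mul_left hdn).isUnit_one_add
  exact isUnit_of_mul_isUnit_left this

/-- in a commutative ring S, if S is m-nil clean then x^m - x is
nilpotent for every x; conversely if x^m - x is always nilpotent and m-1 is a
unit then S is m-nil clean. -/
theorem stmt_19 {S : Type*} [CommRing S] (m : ℕ) (hm : 2 ≤ m) :
    ((∀ x : S, ∃ f n : S, f ^ m = f ∧ IsNilpotent n ∧ x = f + n) →
      ∀ x : S, IsNilpotent (x ^ m - x)) ∧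
    (IsUnit ((m : S) - 1) → (∀ x : S, IsNilpotent (x ^ m - x)) →
      ∀ x : S, ∃ f n : S, f ^ m = f ∧ IsNilpotent n ∧ x = f + n) := by
  constructor
  · rintro h x
    obtain ⟨f, n, hf, hn, rfl⟩ := h x
    obtain ⟨c, hc⟩ : (f + n) - f ∣ (f + n) ^ m - f ^ m := sub_dvd_pow_sub_pow _ _ _
    have : (f + n) ^ m - (f + n) = n * (c - 1) := by
      have : f + n - f = n := by ring
      rw [this] at hc
      rw [mul_sub, ← hc, hf]; ring
    rw [this]
    exact (Commute.all _ _).isNilpotent_mul_right hn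
  · intro hu h x
    have hP : ∃! r : S, IsNilpotent (x - r) ∧
        Polynomial.aeval r (Polynomial.X ^ m - Polynomial.X : Polynomial S) = 0 := by
      apply Polynomial.existsUnique_nilpotent_sub_and_aeval_eq_zero
      · simpa using h x
      · have : Polynomial.derivative (Polynomial.X ^ m - Polynomial.X : Polynomial S) =
            (Polynomial.C (m : S)) * Polynomial.X ^ (m - 1) - 1 := by
          simp [Polynomial.derivative_X_pow]
        rw [this]
        simpa using unit_aux hm hu (h x)
    obtain ⟨r, ⟨hnil, hr⟩, -⟩ := hP
    refine ⟨r, x - r, ?_, hnil, by ring⟩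
    simp only [map_sub, map_pow, Polynomial.aeval_X] at hr
    exact sub_eq_zero.mp hr
end
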